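/- Let Q ∈ L(H) be a J-normal projection on a Krein space (H,J), with E = Q Q^#, P = Q(I − Q^#), F = (I − Q)(I − Q)^#. Then E + P + P^# + F = I, and hence H decomposes as the J-orthogonal direct sum H = R(E) [+] R(P + P^#) [+] R(F) of the ranges of the projections E, P + P^#, and F. -/

import Mathlib

/-!
Write `S = Q^#`. Since `#` is an involutive anti-automorphism, `S` is an idempotent commuting
with `Q`, and `E, P, P^#, F` are the four products `QS, Q(1 - S), (1 - Q)S, (1 - Q)(1 - S)`: they
sum to `1` and annihilate each other. Moreover `E` and `P + P^#` are `J`-selfadjoint, and for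
`A^# B = 0` one has `[A x, B y] = ⟨x, J A^# B y⟩ = 0`.
-/

open ContinuousLinearMap

variable {H : Type*} [NormedAddCommGroup H] [InnerProductSpace ℂ H] [CompleteSpace H]

/-- The `J`-adjoint `T^# = J T* J`. -/
noncomputable def sharp (J T : H →L[ℂ] H) : H →L[ℂ] H :=
  J ∘L (ContinuousLinearMap.adjoint T) ∘L J

lemma IsIdempotentElem.corners_mul_eq_zero_of_commute {R : Type*} [Ring R] {q s : R}
    (hq : IsIdempotentElem q) (hs : IsIdempotentElem s) (hqs : Commute q s) :
    q * s * (q * (1 - s) + (1 - q) * s) = 0 ∧ q * s * ((1 - q) * (1 - s)) = 0 ∧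
      (q * (1 - s) + (1 - q) * s) * ((1 - q) * (1 - s)) = 0 := by
  have hsq : ∀ x, x * s * q = x * q * s := fun x => by rw [mul_assoc, ← hqs.eq, mul_assoc]
  have hss : ∀ x, x * s * s = x * s := fun x => by rw [mul_assoc, hs.eq]
  refine ⟨?_, ?_, ?_⟩ <;>
  · simp only [mul_sub, sub_mul, mul_add, add_mul, mul_one, one_mul, ← mul_assoc, hsq, hss,
      hq.eq, hs.eq, ← hqs.eq]
    abel

lemma ContinuousLinearMap.range_sup_range_sup_range_eq_top {R M : Type*} [Semiring R]
    [TopologicalSpace M] [AddCommMonoid M] [ContinuousAdd M] [Module R M] {A B C : M →L[R] M}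
    (h : A + B + C = 1) :
    LinearMap.range (A : M →ₗ[R] M) ⊔ LinearMap.range (B : M →ₗ[R] M) ⊔
      LinearMap.range (C : M →ₗ[R] M) = ⊤ := by
  refine eq_top_iff.mpr fun x _ => ?_
  rw [← one_apply_eq_self (F := M →L[R] M) x, ← h]
  exact add_mem (add_mem (Submodule.mem_sup_left (Submodule.mem_sup_left ⟨x, rfl⟩))
    (Submodule.mem_sup_left (Submodule.mem_sup_right ⟨x, rfl⟩))) (Submodule.mem_sup_right ⟨x, rfl⟩)

section Sharp

variable {J : H →L[ℂ] H}

lemma sharp_mul (hJ2 : J * J = 1) (A B : H →L[ℂ] H) :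
    sharp J (A * B) = sharp J B * sharp J A := by
  simp only [sharp, mul_def, adjoint_comp]
  simp only [← mul_def, mul_assoc]
  rw [← mul_assoc J J, hJ2, one_mul]

lemma sharp_add (A B : H →L[ℂ] H) : sharp J (A + B) = sharp J A + sharp J B := by
  simp only [sharp, map_add, add_comp, comp_add]

lemma sharp_sub (A B : H →L[ℂ] H) : sharp J (A - B) = sharp J A - sharp J B := by
  simp only [sharp, map_sub, sub_comp, comp_sub]

lemma sharp_one (hJ2 : J * J = 1) : sharp J 1 = 1 := by
  simp only [sharp, adjoint_one, ← mul_def, one_mul, hJ2]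

lemma sharp_sharp (hJsa : adjoint J = J) (hJ2 : J * J = 1) (T : H →L[ℂ] H) :
    sharp J (sharp J T) = T := by
  simp only [sharp, adjoint_comp, hJsa, adjoint_adjoint]
  simp only [← mul_def, ← mul_assoc, hJ2, one_mul]
  rw [mul_assoc, hJ2, mul_one]

lemma inner_apply_eq_zero_of_sharp_mul_eq_zero (hJsa : adjoint J = J) (hJ2 : J * J = 1)
    {A B : H →L[ℂ] H} (h : sharp J A * B = 0) :
    ∀ f ∈ LinearMap.range (A : H →ₗ[ℂ] H), ∀ g ∈ LinearMap.range (B : H →ₗ[ℂ] H),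
      inner ℂ (J f) g = 0 := by
  rintro - ⟨x, rfl⟩ - ⟨y, rfl⟩
  have hJA : adjoint A * J = J * sharp J A := by
    rw [sharp, ← mul_def, ← mul_def, ← mul_assoc, ← mul_assoc, hJ2, one_mul]
  calc inner ℂ (J (A x)) (B y) = inner ℂ x ((adjoint A * J) (B y)) := by
        rw [mul_apply_eq_comp, adjoint_inner_right]
        nth_rewrite 1 [← hJsa]
        exact adjoint_inner_left _ _ _
    _ = 0 := by
        rw [hJA, mul_apply_eq_comp, ← mul_apply_eq_comp _ B, h, zero_apply, map_zero,
          inner_zero_right]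

end Sharp

/-- For a `J`-normal projection `Q`: `E + P + P^# + F = I`, and the ranges of `E`, `P + P^#`
and `F` are mutually `J`-orthogonal, so `H` is their `J`-orthogonal direct sum. -/
theorem stmt4 (J Q : H →L[ℂ] H)
    (hJsa : ContinuousLinearMap.adjoint J = J) (hJ2 : J ∘L J = 1)
    (hQ : Q ∘L Q = Q) (hN : Q ∘L sharp J Q = sharp J Q ∘L Q)
    (E P F : H →L[ℂ] H)
    (hE : E = Q ∘L sharp J Q) (hP : P = Q ∘L (1 - sharp J Q))
    (hF : F = (1 - Q) ∘L sharp J (1 - Q)) :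
    E + P + sharp J P + F = 1 ∧
    LinearMap.range (E : H →ₗ[ℂ] H) ⊔ LinearMap.range ((P + sharp J P : H →L[ℂ] H) : H →ₗ[ℂ] H) ⊔ LinearMap.range (F : H →ₗ[ℂ] H) = ⊤ ∧
    (∀ f ∈ LinearMap.range (E : H →ₗ[ℂ] H), ∀ g ∈ LinearMap.range ((P + sharp J P : H →L[ℂ] H) : H →ₗ[ℂ] H),
      (inner ℂ (J f) g : ℂ) = 0) ∧
    (∀ f ∈ LinearMap.range (E : H →ₗ[ℂ] H), ∀ g ∈ LinearMap.range (F : H →ₗ[ℂ] H), (inner ℂ (J f) g : ℂ) = 0) ∧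
    (∀ f ∈ LinearMap.range ((P + sharp J P : H →L[ℂ] H) : H →ₗ[ℂ] H), ∀ g ∈ LinearMap.range (F : H →ₗ[ℂ] H),
      (inner ℂ (J f) g : ℂ) = 0) := by
  set S := sharp J Q
  have hJ : J * J = 1 := hJ2
  have hQi : IsIdempotentElem Q := hQ
  have hSi : IsIdempotentElem S := by
    rw [IsIdempotentElem, ← sharp_mul hJ, hQi.eq]
  have hSS : sharp J S = Q := sharp_sharp hJsa hJ Q
  have hE' : E = Q * S := hE
  have hP' : P = Q * (1 - S) := hP
  have hPs : sharp J P = (1 - Q) * S := by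
    rw [hP', sharp_mul hJ, sharp_sub, sharp_one hJ, hSS]
  have hF' : F = (1 - Q) * (1 - S) := by
    rw [hF, sharp_sub, sharp_one hJ]; rfl
  have hEs : sharp J E = E := by rw [hE', sharp_mul hJ, hSS]
  have hGs : sharp J (P + sharp J P) = P + sharp J P := by
    rw [sharp_add, sharp_sharp hJsa hJ, add_comm]
  have hsum : E + P + sharp J P + F = 1 := by
    rw [hPs, hE', hP', hF']
    noncomm_ring
  obtain ⟨hEG, hEF, hGF⟩ := hQi.corners_mul_eq_zero_of_commute hSi hN
  refine ⟨hsum, range_sup_range_sup_range_eq_top (by rw [← hsum, ← add_assoc E]), ?_, ?_, ?_⟩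
  · exact inner_apply_eq_zero_of_sharp_mul_eq_zero hJsa hJ (by rw [hEs, hPs, hE', hP', hEG])
  · exact inner_apply_eq_zero_of_sharp_mul_eq_zero hJsa hJ (by rw [hEs, hE', hF', hEF])
  · exact inner_apply_eq_zero_of_sharp_mul_eq_zero hJsa hJ (by rw [hGs, hPs, hP', hF', hGF])
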